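/- Every continuous character of the p-adic numbers ℚ_p is of the form x ↦ e^{2πi λ(ξx)} for a unique ξ ∈ ℚ_p, where λ: ℚ_p → ℚ/ℤ is the canonical map with kernel ℤ_p; in particular ℚ_p is self-dual as a locally compact abelian group. -/

import Mathlib

/-!
Through `AddCircle.toCircle` a continuous character `χ` becomes a continuous homomorphism
`f : ℚ_p → ℝ/ℤ`. Since `ℝ/ℤ` has no small subgroups (doubling moves a small nonzero point away
from `0`), `f` kills a ball `c ℤ_p`, so `F = f (c ·)` kills `ℤ_p`. The element `λ(p⁻ⁿ)` has order
exactly `pⁿ`, hence generates the `pⁿ`-torsion of `ℝ/ℤ`, which contains `F(p⁻ⁿ)`. The sets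
`Sₙ = {ξ | λ(ξ p⁻ⁿ) = F(p⁻ⁿ)}` are therefore nonempty, closed and decreasing, with `S₀ = ℤ_p`
compact; any `ξ` in their intersection satisfies `F = λ(ξ ·)` because `ℚ_p = ℤ[1/p] + ℤ_p`.
Uniqueness holds because `λ(p⁻¹) ≠ 0`.
-/

namespace AddCircle

variable {T : ℝ}

theorem exists_coe_eq_and_abs_eq_norm (y : AddCircle T) :
    ∃ x : ℝ, (x : AddCircle T) = y ∧ |x| = ‖y‖ := by
  obtain ⟨x, rfl⟩ := QuotientAddGroup.mk_surjective y
  refine ⟨x - round (T⁻¹ * x) * T, ?_, (norm_eq T).symm⟩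
  rw [coe_sub, sub_eq_self, coe_eq_zero_iff]
  exact ⟨round (T⁻¹ * x), zsmul_eq_mul _ _⟩

theorem norm_two_nsmul_of_norm_le (hT : T ≠ 0) {y : AddCircle T} (hy : ‖y‖ ≤ |T| / 4) :
    ‖2 • y‖ = 2 * ‖y‖ := by
  obtain ⟨x, rfl, hx⟩ := exists_coe_eq_and_abs_eq_norm y
  rw [← coe_nsmul, ← hx, nsmul_eq_mul, Nat.cast_ofNat, ← abs_two, ← abs_mul, abs_two,
    norm_coe_eq_abs_iff _ hT, abs_mul, abs_two]
  linarith

theorem eq_zero_of_forall_norm_nsmul_le (hT : T ≠ 0) {y : AddCircle T}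
    (hy : ∀ n : ℕ, ‖n • y‖ ≤ |T| / 4) : y = 0 := by
  have hpow : ∀ k : ℕ, ‖(2 ^ k) • y‖ = 2 ^ k * ‖y‖ := by
    intro k
    induction k with
    | zero => simp
    | succ k ih =>
      rw [pow_succ', mul_smul, norm_two_nsmul_of_norm_le hT (hy (2 ^ k)), ih]
      ring
  by_contra hne
  obtain ⟨k, hk⟩ := pow_unbounded_of_one_lt (|T| / 4 / ‖y‖) one_lt_two
  have := hy (2 ^ k)
  rw [hpow, ← le_div_iff₀ (norm_pos_iff.mpr hne)] at this
  linarith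

theorem mem_zmultiples_of_nsmul_eq_zero {u y : AddCircle T} {n : ℕ} (hn : 0 < n)
    (hu : addOrderOf u = n) (hy : n • y = 0) : y ∈ AddSubgroup.zmultiples u := by
  have hsub : (AddSubgroup.zmultiples u : Set (AddCircle T)) ⊆ {x | n • x = 0} := by
    rintro _ ⟨k, rfl⟩
    simp [← hu]
  have hcard : {x : AddCircle T | n • x = 0}.encard ≤
      (AddSubgroup.zmultiples u : Set (AddCircle T)).encard := by
    rw [← ((finite_torsion T hn).subset hsub).cast_ncard_eq, ← Nat.card_coe_set_eq,
      SetLike.coe_sort_coe, Nat.card_zmultiples, hu]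
    exact card_torsion_le_of_isSMulRegular T n hn.ne' (.of_ne_zero (by positivity))
  rw [← SetLike.mem_coe, (finite_torsion T hn).eq_of_subset_of_encard_le' hsub hcard]
  exact hy

theorem exists_continuous_addMonoidHom_toCircle_eq {G : Type*} [AddZeroClass G]
    [TopologicalSpace G] (hT : T ≠ 0) (χ : G → Circle) (hχ : Continuous χ)
    (hadd : ∀ x y, χ (x + y) = χ x * χ y) :
    ∃ f : G →+ AddCircle T, Continuous f ∧ ∀ x, toCircle (f x) = χ x := by
  let e := homeomorphCircle hT
  have he : ∀ z, toCircle (e.symm z) = z := fun z => by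
    rw [← homeomorphCircle_apply hT, e.apply_symm_apply]
  refine ⟨AddMonoidHom.mk' (e.symm ∘ χ) fun x y => injective_toCircle hT ?_,
    e.symm.continuous.comp hχ, fun x => he (χ x)⟩
  simp only [Function.comp_apply, toCircle_add, he, hadd]

end AddCircle

theorem exists_ne_zero_forall_norm_le_one_map_mul_eq_zero {K : Type*} [NontriviallyNormedField K]
    [IsUltrametricDist K] {T : ℝ} (hT : T ≠ 0) (f : K →+ AddCircle T) (hf : Continuous f) :
    ∃ c : K, c ≠ 0 ∧ ∀ x, ‖x‖ ≤ 1 → f (c * x) = 0 := by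
  obtain ⟨δ, hδ, hfδ⟩ := Metric.continuousAt_iff.mp hf.continuousAt (|T| / 4) (by positivity)
  obtain ⟨c, hc0, hcδ⟩ := NormedField.exists_norm_lt K hδ
  refine ⟨c, norm_pos_iff.mp hc0, fun x hx =>
    AddCircle.eq_zero_of_forall_norm_nsmul_le hT fun n => ?_⟩
  have hnx : ‖(n : K) * x‖ ≤ 1 := (norm_mul_le _ _).trans
    (mul_le_one₀ (IsUltrametricDist.norm_natCast_le_one K n) (norm_nonneg _) hx)
  have hsmall : dist (c * (n * x)) 0 < δ := by
    rw [dist_zero_right, norm_mul]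
    exact (mul_le_of_le_one_right (norm_nonneg c) hnx).trans_lt hcδ
  rw [← map_nsmul, nsmul_eq_mul, mul_left_comm]
  simpa using (hfδ hsmall).le

namespace Padic

variable {p : ℕ} [hp : Fact p.Prime]

theorem exists_norm_sub_intCast_mul_inv_p_pow_le_one (x : ℚ_[p]) :
    ∃ (n : ℕ) (k : ℤ), ‖x - k * (p : ℚ_[p])⁻¹ ^ n‖ ≤ 1 := by
  obtain ⟨n, hn⟩ := pow_unbounded_of_one_lt ‖x‖ (Nat.one_lt_cast.mpr hp.out.one_lt)
  have hpn : (0 : ℝ) < (p : ℝ) ^ n := pow_pos (Nat.cast_pos.mpr hp.out.pos) n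
  have hy : ‖(p : ℚ_[p]) ^ n * x‖ ≤ 1 := by
    rw [norm_mul, norm_pow, Padic.norm_p, inv_pow, inv_mul_le_one₀ hpn]
    exact hn.le
  let y : ℤ_[p] := ⟨_, hy⟩
  obtain ⟨k, hk⟩ := PadicInt.denseRange_intCast.exists_dist_lt y (inv_pos.mpr hpn)
  refine ⟨n, k, ?_⟩
  have hp0 : (p : ℚ_[p]) ≠ 0 := by exact_mod_cast hp.out.ne_zero
  have hsplit :
      x - k * (p : ℚ_[p])⁻¹ ^ n = (p : ℚ_[p])⁻¹ ^ n * ((p : ℚ_[p]) ^ n * x - k) := by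
    rw [mul_sub, ← mul_assoc, inv_pow, inv_mul_cancel₀ (pow_ne_zero n hp0), one_mul, mul_comm]
  rw [hsplit, norm_mul, norm_pow, norm_inv, Padic.norm_p, inv_inv, ← le_div_iff₀' hpn, one_div]
  rw [dist_eq_norm] at hk
  exact hk.le

variable {lam : ℚ_[p] →+ AddCircle (1 : ℝ)}

theorem addOrderOf_map_inv_p_pow (hlam : ∀ x, lam x = 0 ↔ ‖x‖ ≤ 1) (n : ℕ) :
    addOrderOf (lam ((p : ℚ_[p])⁻¹ ^ n)) = p ^ n := by
  have hp0 : (p : ℚ_[p]) ≠ 0 := by exact_mod_cast hp.out.ne_zero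
  have hpow : ∀ m k : ℕ,
      p ^ m • lam ((p : ℚ_[p])⁻¹ ^ (m + k)) = lam ((p : ℚ_[p])⁻¹ ^ k) := by
    intro m k
    rw [← map_nsmul, nsmul_eq_mul, Nat.cast_pow, pow_add, ← mul_assoc, ← mul_pow,
      mul_inv_cancel₀ hp0, one_pow, one_mul]
  cases n with
  | zero => simp [(hlam 1).mpr norm_one.le]
  | succ n =>
    refine addOrderOf_eq_prime_pow ?_ ?_
    · rw [hpow, pow_one, hlam, norm_inv, Padic.norm_p, inv_inv, not_le]
      exact_mod_cast hp.out.one_lt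
    · simpa [(hlam 1).mpr norm_one.le] using hpow (n + 1) 0

theorem exists_intCast_mul_inv_p_pow_eq (hlam : ∀ x, lam x = 0 ↔ ‖x‖ ≤ 1) {n : ℕ}
    {y : AddCircle (1 : ℝ)} (hy : p ^ n • y = 0) :
    ∃ k : ℤ, lam (k * (p : ℚ_[p])⁻¹ ^ n) = y := by
  obtain ⟨k, rfl⟩ := AddSubgroup.mem_zmultiples_iff.mp <|
    AddCircle.mem_zmultiples_of_nsmul_eq_zero (pow_pos hp.out.pos n)
      (addOrderOf_map_inv_p_pow hlam n) hy
  exact ⟨k, by rw [← zsmul_eq_mul, map_zsmul]⟩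

theorem exists_forall_map_mul_inv_p_pow_eq (hlam_cont : Continuous lam)
    (hlam : ∀ x, lam x = 0 ↔ ‖x‖ ≤ 1) (F : ℚ_[p] →+ AddCircle (1 : ℝ))
    (hF : ∀ x, ‖x‖ ≤ 1 → F x = 0) :
    ∃ ξ : ℚ_[p], ∀ n : ℕ,
      lam (ξ * (p : ℚ_[p])⁻¹ ^ n) = F ((p : ℚ_[p])⁻¹ ^ n) := by
  have hp0 : (p : ℚ_[p]) ≠ 0 := by exact_mod_cast hp.out.ne_zero
  let S : ℕ → Set ℚ_[p] := fun n =>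
    {ξ | lam (ξ * (p : ℚ_[p])⁻¹ ^ n) = F ((p : ℚ_[p])⁻¹ ^ n)}
  have hclosed : ∀ n, IsClosed (S n) := fun n => isClosed_eq (by fun_prop) continuous_const
  have hanti : ∀ n, S (n + 1) ⊆ S n := by
    intro n ξ (hξ : lam _ = F _)
    have hmul : ∀ z : ℚ_[p],
        (p : ℚ_[p]) * (z * (p : ℚ_[p])⁻¹ ^ (n + 1)) = z * (p : ℚ_[p])⁻¹ ^ n := by
      intro z
      rw [pow_succ]
      field_simp
    show lam _ = F _
    rw [← hmul ξ, ← one_mul ((p : ℚ_[p])⁻¹ ^ n), ← hmul 1, one_mul]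
    simp only [← nsmul_eq_mul, map_nsmul, hξ]
  have hne : ∀ n, (S n).Nonempty := by
    intro n
    have htors : p ^ n • F ((p : ℚ_[p])⁻¹ ^ n) = 0 := by
      rw [← map_nsmul, nsmul_eq_mul, Nat.cast_pow, ← mul_pow, mul_inv_cancel₀ hp0, one_pow]
      exact hF 1 norm_one.le
    obtain ⟨k, hk⟩ := exists_intCast_mul_inv_p_pow_eq hlam htors
    exact ⟨k, hk⟩
  have hS0 : IsCompact (S 0) := by
    refine (isCompact_closedBall 0 1).of_isClosed_subset (hclosed 0)
      fun ξ (hξ : lam _ = F _) => ?_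
    rw [pow_zero, mul_one, hF 1 norm_one.le, hlam] at hξ
    simpa using hξ
  obtain ⟨ξ, hξ⟩ :=
    hS0.nonempty_iInter_of_sequence_nonempty_isCompact_isClosed S hanti hne hclosed
  exact ⟨ξ, Set.mem_iInter.mp hξ⟩

theorem exists_forall_eq_map_mul (hlam_cont : Continuous lam)
    (hlam : ∀ x, lam x = 0 ↔ ‖x‖ ≤ 1) (F : ℚ_[p] →+ AddCircle (1 : ℝ))
    (hF : ∀ x, ‖x‖ ≤ 1 → F x = 0) : ∃ ξ : ℚ_[p], ∀ x, F x = lam (ξ * x) := by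
  obtain ⟨ξ, hξ⟩ := exists_forall_map_mul_inv_p_pow_eq hlam_cont hlam F hF
  have hξ1 : ‖ξ‖ ≤ 1 := by
    rw [← hlam, ← mul_one ξ, ← pow_zero (p : ℚ_[p])⁻¹, hξ, pow_zero]
    exact hF 1 norm_one.le
  refine ⟨ξ, fun x => ?_⟩
  obtain ⟨n, k, hx⟩ := exists_norm_sub_intCast_mul_inv_p_pow_le_one x
  set r := x - k * (p : ℚ_[p])⁻¹ ^ n
  have hξr : lam (ξ * r) = 0 := by
    rw [hlam, norm_mul]
    exact mul_le_one₀ hξ1 (norm_nonneg _) hx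
  calc F x = k • F ((p : ℚ_[p])⁻¹ ^ n) + F r := by
        rw [← map_zsmul, zsmul_eq_mul, ← map_add, add_sub_cancel]
    _ = k • lam (ξ * (p : ℚ_[p])⁻¹ ^ n) + lam (ξ * r) := by rw [hξ, hF r hx, hξr]
    _ = lam (ξ * x) := by
        rw [← map_zsmul, zsmul_eq_mul, ← map_add, mul_left_comm, ← mul_add, add_sub_cancel]

theorem map_mul_injective (hlam : ∀ x, lam x = 0 ↔ ‖x‖ ≤ 1) {ξ η : ℚ_[p]}
    (h : ∀ x, lam (ξ * x) = lam (η * x)) : ξ = η := by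
  by_contra hne
  have hzero : lam ((ξ - η) * ((ξ - η)⁻¹ * (p : ℚ_[p])⁻¹)) = 0 := by
    rw [sub_mul, map_sub, h, sub_self]
  rw [hlam, ← mul_assoc, mul_inv_cancel₀ (sub_ne_zero.mpr hne), one_mul, norm_inv, Padic.norm_p,
    inv_inv] at hzero
  exact hzero.not_gt (Nat.one_lt_cast.mpr hp.out.one_lt)

end Padic

/-- Self-duality of `ℚ_p`: if `λ : ℚ_p → ℝ/ℤ` is the canonical additive map with kernel `ℤ_p`,
then every continuous character of `ℚ_p` has the form `x ↦ e^{2πi λ(ξx)}` for a unique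
`ξ ∈ ℚ_p`. -/
theorem padic_characters (p : ℕ) [Fact p.Prime]
    (lam : ℚ_[p] →+ AddCircle (1 : ℝ)) (hlam_cont : Continuous lam)
    (hlam_ker : ∀ x : ℚ_[p], lam x = 0 ↔ ‖x‖ ≤ 1)
    (χ : ℚ_[p] → Circle) (hcont : Continuous χ)
    (hhom : ∀ x y : ℚ_[p], χ (x + y) = χ x * χ y) :
    ∃! ξ : ℚ_[p], ∀ x : ℚ_[p], χ x = AddCircle.toCircle (lam (ξ * x)) := by
  obtain ⟨f, hf_cont, hf⟩ :=
    AddCircle.exists_continuous_addMonoidHom_toCircle_eq one_ne_zero χ hcont hhom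
  obtain ⟨c, hc0, hc⟩ := exists_ne_zero_forall_norm_le_one_map_mul_eq_zero one_ne_zero f hf_cont
  obtain ⟨ξ, hξ⟩ :=
    Padic.exists_forall_eq_map_mul hlam_cont hlam_ker (f.comp (AddMonoidHom.mulLeft c)) hc
  have hf_eq : ∀ x, f x = lam (ξ * c⁻¹ * x) := fun x => by
    simpa [mul_inv_cancel_left₀ hc0, mul_assoc] using hξ (c⁻¹ * x)
  refine ⟨ξ * c⁻¹, fun x => by rw [← hf, hf_eq], fun η hη => ?_⟩
  refine Padic.map_mul_injective hlam_ker fun x => AddCircle.injective_toCircle one_ne_zero ?_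
  rw [← hη, ← hf, hf_eq]
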